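/- (Hyers–Ulam type statement) Let f : ℝ → ℝ be ε-convex, i.e., f(t x + (1-t) y) ≤ t f(x) + (1-t) f(y) + ε for all x, y and t ∈ [0,1]. Then the function g defined as the convex envelope (supremum of affine functions h with h ≤ f + 0) satisfies |f(x) - g(x)| ≤ ε for all x, i.e., there exists a convex function g with sup_x |f(x) - g(x)| ≤ ε. -/

import Mathlib

/-!
At every point `p` an `ε`-convex function on the line has a supporting line shifted down by `ε`:
take as slope the supremum of the left difference quotients `(f p - ε - f x) / (p - x)`, `x < p`;
the three-point form of `ε`-convexity bounds each of them by every right quotient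
`(f y - f p + ε) / (y - p)`, `p < y`. The upper envelope of these affine
minorants is convex, lies below `f`, and reaches `f p - ε` at each `p`.
-/

open Set

theorem ConvexOn.ciSup {E ι : Type*} [AddCommGroup E] [Module ℝ E] [Nonempty ι] {s : Set E}
    {φ : ι → E → ℝ} (hφ : ∀ i, ConvexOn ℝ s (φ i))
    (hbdd : ∀ x ∈ s, BddAbove (range fun i => φ i x)) :
    ConvexOn ℝ s fun x => ⨆ i, φ i x := by
  obtain ⟨i₀⟩ := ‹Nonempty ι›
  refine ⟨(hφ i₀).1, fun x hx y hy a b ha hb hab => ciSup_le fun i => ?_⟩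
  calc φ i (a • x + b • y) ≤ a * φ i x + b * φ i y := (hφ i).2 hx hy ha hb hab
    _ ≤ a * (⨆ j, φ j x) + b * ⨆ j, φ j y := by
      gcongr
      exacts [le_ciSup (hbdd x hx) i, le_ciSup (hbdd y hy) i]

theorem exists_convexOn_abs_sub_le_of_affine_minorants {E : Type*} [AddCommGroup E] [Module ℝ E]
    {f : E → ℝ} {ε : ℝ}
    (h : ∀ p, ∃ φ : E →ᵃ[ℝ] ℝ, (∀ x, φ x ≤ f x) ∧ f p - ε ≤ φ p) :
    ∃ g : E → ℝ, ConvexOn ℝ univ g ∧ ∀ x, |f x - g x| ≤ ε := by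
  choose φ hφf hφp using h
  have hbdd : ∀ x, BddAbove (range fun p => φ p x) := fun x => ⟨f x, by
    rintro _ ⟨p, rfl⟩; exact hφf p x⟩
  refine ⟨fun x => ⨆ p, φ p x, ConvexOn.ciSup (fun p => ?_) fun x _ => hbdd x, fun x => ?_⟩
  · simpa using (convexOn_id convex_univ).comp_affineMap (φ p)
  · have hle : ⨆ p, φ p x ≤ f x := ciSup_le fun p => hφf p x
    have hge : f x - ε ≤ ⨆ p, φ p x := (hφp x).trans (le_ciSup (hbdd x) x)
    rw [abs_le]
    constructor <;> linarith

theorem slope_sub_le_slope_add_of_epsilon_convex {f : ℝ → ℝ} {ε : ℝ}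
    (hec : ∀ x y t : ℝ, 0 ≤ t → t ≤ 1 → f (t * x + (1 - t) * y) ≤ t * f x + (1 - t) * f y + ε)
    {x p y : ℝ} (hxp : x < p) (hpy : p < y) :
    (f p - ε - f x) / (p - x) ≤ (f y - f p + ε) / (y - p) := by
  have hyx : 0 < y - x := by linarith
  have hp : (y - p) / (y - x) * x + (1 - (y - p) / (y - x)) * y = p := by
    field_simp; ring
  have h := hec x y ((y - p) / (y - x)) (div_nonneg (by linarith) hyx.le)
    (div_le_one_of_le₀ (by linarith) hyx.le)
  rw [hp] at h
  have h' : f p * (y - x) ≤ f x * (y - p) + f y * (p - x) + ε * (y - x) := by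
    have := mul_le_mul_of_nonneg_right h hyx.le
    field_simp at this
    linarith
  rw [div_le_div_iff₀ (by linarith) (by linarith)]
  linarith

theorem exists_affineMap_le_of_epsilon_convex {f : ℝ → ℝ} {ε : ℝ}
    (hec : ∀ x y t : ℝ, 0 ≤ t → t ≤ 1 → f (t * x + (1 - t) * y) ≤ t * f x + (1 - t) * f y + ε)
    (p : ℝ) : ∃ φ : ℝ →ᵃ[ℝ] ℝ, (∀ x, φ x ≤ f x) ∧ φ p = f p - ε := by
  have hε : 0 ≤ ε := by simpa using hec p p 1
  set L := (fun x => (f p - ε - f x) / (p - x)) '' Iio p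
  have hL : BddAbove L := ⟨(f (p + 1) - f p + ε) / (p + 1 - p), by
    rintro _ ⟨x, hx, rfl⟩
    exact slope_sub_le_slope_add_of_epsilon_convex hec hx (lt_add_one p)⟩
  set m := sSup L
  refine ⟨⟨fun x => f p - ε + m * (x - p), m • LinearMap.id, fun x v => by simp; ring⟩,
    fun x => ?_, by simp⟩
  show f p - ε + m * (x - p) ≤ f x
  rcases lt_trichotomy x p with hxp | rfl | hpx
  · have h := le_csSup hL ⟨x, hxp, rfl⟩
    rw [div_le_iff₀ (sub_pos.2 hxp)] at h
    linarith
  · simpa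
  · have h : m ≤ (f x - f p + ε) / (x - p) := csSup_le ⟨_, ⟨p - 1, sub_one_lt p, rfl⟩⟩ <| by
      rintro _ ⟨z, hz, rfl⟩
      exact slope_sub_le_slope_add_of_epsilon_convex hec hz hpx
    rw [le_div_iff₀ (sub_pos.2 hpx)] at h
    linarith

theorem hyers_ulam_epsilon_convex_general (ε : ℝ) (f : ℝ → ℝ)
    (hec : ∀ x y t : ℝ, 0 ≤ t → t ≤ 1 →
      f (t * x + (1 - t) * y) ≤ t * f x + (1 - t) * f y + ε) :
    ∃ g : ℝ → ℝ, ConvexOn ℝ Set.univ g ∧ ∀ x : ℝ, |f x - g x| ≤ ε :=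
  exists_convexOn_abs_sub_le_of_affine_minorants fun p =>
    (exists_affineMap_le_of_epsilon_convex hec p).imp fun _ hφ => ⟨hφ.1, hφ.2.ge⟩

/-- Hyers–Ulam stability of convexity on the line: every continuous `ε`-convex
function `f : ℝ → ℝ` lies within `ε` of some convex function `g`. -/
theorem hyers_ulam_epsilon_convex (ε : ℝ) (hε : 0 ≤ ε) (f : ℝ → ℝ)
    (hf : Continuous f)
    (hec : ∀ x y t : ℝ, 0 ≤ t → t ≤ 1 →
      f (t * x + (1 - t) * y) ≤ t * f x + (1 - t) * f y + ε) :
    ∃ g : ℝ → ℝ, ConvexOn ℝ Set.univ g ∧ ∀ x : ℝ, |f x - g x| ≤ ε :=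
  hyers_ulam_epsilon_convex_general ε f hec
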